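/- Let (λⁿ)_{n≥1} ⊂ Λ converge weakly to λ ∈ Λ, i.e. ∫ f dλⁿ → ∫ f dλ for every bounded continuous f : [0,T] × U → ℝ. Then for every m ≥ 1, every finite Borel partition {A₁, …, A_m} of [0,T], and all bounded continuous functions g₁, …, g_m : U → ℝ, one has ∫ Σ_{l=1}^m 1_{A_l}(t) g_l(u) λⁿ(dt,du) → ∫ Σ_{l=1}^m 1_{A_l}(t) g_l(u) λ(dt,du) as n → ∞. -/

import Mathlib

open MeasureTheory Filter Topology Set BoundedContinuousFunction

/-!
A finite measure on `[0,T]` is determined by its distribution function, so all `λⁿ` and `λ` have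
the same first marginal `ν` (Lebesgue measure). Replacing `1_A` by a bounded continuous `φ` with
`‖1_A - φ‖_{L¹(ν)} ≤ δ` therefore changes `∫ 1_A(t) g(u) dμ` by at most `‖g‖_∞ δ`, simultaneously
for `μ = λⁿ` and `μ = λ`, while `∫ φ(t) g(u) dλⁿ → ∫ φ(t) g(u) dλ` by weak convergence.
-/

lemma tendsto_of_forall_approx {ι X : Type*} [PseudoMetricSpace X] {l : Filter ι}
    {x : ι → X} {y : X}
    (h : ∀ ε > 0, ∃ a : ι → X, ∃ b, Tendsto a l (𝓝 b) ∧ (∀ i, dist (x i) (a i) ≤ ε) ∧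
      dist b y ≤ ε) :
    Tendsto x l (𝓝 y) := by
  refine Metric.tendsto_nhds.2 fun ε hε => ?_
  obtain ⟨a, b, hab, hxa, hby⟩ := h (ε / 4) (by positivity)
  filter_upwards [Metric.tendsto_nhds.1 hab (ε / 4) (by positivity)] with i hi
  linarith [dist_triangle4 (x i) (a i) b y, hxa i]

section Product

variable {α β : Type*} [MeasurableSpace α] [MeasurableSpace β] [TopologicalSpace β]
  {μ : Measure (α × β)} {h : α → ℝ}

lemma integrable_comp_fst_mul_comp_snd [OpensMeasurableSpace β]
    (hh : Integrable h (μ.map Prod.fst)) (g : β →ᵇ ℝ) :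
    Integrable (fun p => h p.1 * g p.2) μ :=
  (hh.comp_measurable measurable_fst).mul_bdd
    (g.continuous.measurable.comp measurable_snd).aestronglyMeasurable
    (ae_of_all _ fun p => g.norm_coe_le_norm p.2)

lemma abs_integral_comp_fst_mul_comp_snd_le (hh : Integrable h (μ.map Prod.fst)) (g : β →ᵇ ℝ) :
    |∫ p, h p.1 * g p.2 ∂μ| ≤ ‖g‖ * ∫ x, |h x| ∂(μ.map Prod.fst) := by
  simp_rw [← Real.norm_eq_abs]
  rw [integral_map measurable_fst.aemeasurable hh.aestronglyMeasurable.norm,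
    ← integral_const_mul]
  refine norm_integral_le_of_norm_le
    ((hh.comp_measurable measurable_fst).abs.const_mul _) (ae_of_all _ fun p => ?_)
  rw [norm_mul, mul_comm]
  exact mul_le_mul_of_nonneg_right (g.norm_coe_le_norm _) (norm_nonneg _)

theorem tendsto_integral_comp_fst_mul_comp_snd [TopologicalSpace α] [BorelSpace α]
    [NormalSpace α] [OpensMeasurableSpace β] {μs : ℕ → Measure (α × β)}
    [(μ.map Prod.fst).WeaklyRegular] (hmarg : ∀ n, (μs n).map Prod.fst = μ.map Prod.fst)
    (hweak : ∀ f : α × β →ᵇ ℝ, Tendsto (fun n => ∫ p, f p ∂μs n) atTop (𝓝 (∫ p, f p ∂μ)))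
    (hh : Integrable h (μ.map Prod.fst)) (g : β →ᵇ ℝ) :
    Tendsto (fun n => ∫ p, h p.1 * g p.2 ∂μs n) atTop (𝓝 (∫ p, h p.1 * g p.2 ∂μ)) := by
  refine tendsto_of_forall_approx fun ε hε => ?_
  obtain ⟨φ, hφh, hφ⟩ :=
    hh.exists_boundedContinuous_integral_sub_le (ε := ε / (‖g‖ + 1)) (by positivity)
  let F : α × β →ᵇ ℝ :=
    φ.compContinuous ⟨Prod.fst, continuous_fst⟩ * g.compContinuous ⟨Prod.snd, continuous_snd⟩
  have hclose : ∀ ρ : Measure (α × β), ρ.map Prod.fst = μ.map Prod.fst →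
      dist (∫ p, h p.1 * g p.2 ∂ρ) (∫ p, F p ∂ρ) ≤ ε := by
    intro ρ hρ
    rw [← hρ] at hh hφ hφh
    calc dist (∫ p, h p.1 * g p.2 ∂ρ) (∫ p, F p ∂ρ)
        = |∫ p, (h - φ) p.1 * g p.2 ∂ρ| := by
          change |_ - ∫ p, φ p.1 * g p.2 ∂ρ| = _
          rw [← integral_sub (integrable_comp_fst_mul_comp_snd hh g)
            (integrable_comp_fst_mul_comp_snd hφ g)]
          simp only [Pi.sub_apply, sub_mul]
      _ ≤ ‖g‖ * ∫ x, |(h - φ) x| ∂(ρ.map Prod.fst) :=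
          abs_integral_comp_fst_mul_comp_snd_le (hh.sub hφ) g
      _ ≤ ‖g‖ * (ε / (‖g‖ + 1)) := by gcongr; exact hφh
      _ ≤ ε := by
          rw [mul_div_assoc', div_le_iff₀ (by positivity)]
          nlinarith [norm_nonneg g]
  exact ⟨fun n => ∫ p, F p ∂μs n, ∫ p, F p ∂μ, hweak F, fun n => hclose _ (hmarg n),
    by rw [dist_comm]; exact hclose μ rfl⟩

end Product

section IccProd

variable {T : ℝ} {β : Type*} [MeasurableSpace β] {μ ν : Measure (Icc (0 : ℝ) T × β)}

lemma isFiniteMeasure_of_measure_fst_le_eq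
    (hμ : ∀ t ∈ Icc (0 : ℝ) T, μ {p | (p.1 : ℝ) ≤ t} = ENNReal.ofReal t) : IsFiniteMeasure μ := by
  rcases isEmpty_or_nonempty (Icc (0 : ℝ) T × β) with _ | ⟨⟨p⟩⟩
  · infer_instance
  have hT : T ∈ Icc (0 : ℝ) T := ⟨p.1.2.1.trans p.1.2.2, le_rfl⟩
  have huniv : {p : Icc (0 : ℝ) T × β | (p.1 : ℝ) ≤ T} = univ := eq_univ_of_forall fun p => p.1.2.2
  exact ⟨by rw [← huniv, hμ T hT]; exact ENNReal.ofReal_lt_top⟩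

lemma map_fst_eq_of_measure_fst_le_eq [IsFiniteMeasure μ]
    (h : ∀ t ∈ Icc (0 : ℝ) T, μ {p | (p.1 : ℝ) ≤ t} = ν {p | (p.1 : ℝ) ≤ t}) :
    μ.map Prod.fst = ν.map Prod.fst := by
  refine Measure.ext_of_Iic _ _ fun a => ?_
  rw [Measure.map_apply measurable_fst measurableSet_Iic,
    Measure.map_apply measurable_fst measurableSet_Iic]
  exact h a a.2

end IccProd

theorem weak_convergence_implies_simple_convergence_general
    (T : ℝ) (U : Set ℝ)
    (lam : ℕ → Measure (↥(Set.Icc (0:ℝ) T) × ↥U))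
    (lamLim : Measure (↥(Set.Icc (0:ℝ) T) × ↥U))
    -- `λⁿ ∈ Λ`
    (hlam : ∀ n, ∀ t ∈ Set.Icc (0:ℝ) T,
      lam n {p : ↥(Set.Icc (0:ℝ) T) × ↥U | (p.1 : ℝ) ≤ t} = ENNReal.ofReal t)
    -- `λ ∈ Λ`
    (hlamLim : ∀ t ∈ Set.Icc (0:ℝ) T,
      lamLim {p : ↥(Set.Icc (0:ℝ) T) × ↥U | (p.1 : ℝ) ≤ t} = ENNReal.ofReal t)
    -- weak convergence `λⁿ → λ`
    (hweak : ∀ f : ↥(Set.Icc (0:ℝ) T) × ↥U → ℝ, Continuous f →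
      (∃ C, ∀ p, |f p| ≤ C) →
      Tendsto (fun n => ∫ p, f p ∂(lam n)) atTop (𝓝 (∫ p, f p ∂lamLim))) :
    -- convergence of integrals of simple test functions
    ∀ m : ℕ, 1 ≤ m → ∀ A : Fin m → Set (↥(Set.Icc (0:ℝ) T)),
      (∀ l, MeasurableSet (A l)) →
      (Pairwise fun l l' => Disjoint (A l) (A l')) →
      (⋃ l, A l) = Set.univ →
      ∀ g : Fin m → ↥U → ℝ,
        (∀ l, Continuous (g l)) → (∀ l, ∃ C, ∀ u, |g l u| ≤ C) →
        Tendsto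
          (fun n => ∫ p, ∑ l, (A l).indicator (fun _ => g l p.2) p.1 ∂(lam n))
          atTop
          (𝓝 (∫ p, ∑ l, (A l).indicator (fun _ => g l p.2) p.1 ∂lamLim)) := by
  intro m _ A hA _ _ g hg hgC
  have := isFiniteMeasure_of_measure_fst_le_eq hlamLim
  have hmarg n : (lam n).map Prod.fst = lamLim.map Prod.fst :=
    have := isFiniteMeasure_of_measure_fst_le_eq (hlam n)
    map_fst_eq_of_measure_fst_le_eq fun t ht => (hlam n t ht).trans (hlamLim t ht).symm
  have hweak' (f : Icc (0 : ℝ) T × U →ᵇ ℝ) := hweak f f.continuous ⟨‖f‖, f.norm_coe_le_norm⟩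
  let gb l : U →ᵇ ℝ := .ofNormedAddCommGroup (g l) (hg l) _ (hgC l).choose_spec
  have hA1 l : Integrable ((A l).indicator 1) (lamLim.map Prod.fst) :=
    (integrable_const (1 : ℝ)).indicator (hA l)
  have hsplit l t u : (A l).indicator (fun _ => g l u) t = (A l).indicator 1 t * gb l u := by
    by_cases ht : t ∈ A l <;> simp [ht, gb]
  have hint ρ (hρ : ρ.map Prod.fst = lamLim.map Prod.fst) l :
      Integrable (fun p : Icc (0 : ℝ) T × U => (A l).indicator 1 p.1 * gb l p.2) ρ :=
    integrable_comp_fst_mul_comp_snd (hρ ▸ hA1 l) (gb l)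
  simp only [hsplit]
  rw [integral_finsetSum _ fun l _ => hint lamLim rfl l]
  simp only [integral_finsetSum _ fun l _ => hint (lam _) (hmarg _) l]
  exact tendsto_finsetSum _ fun l _ =>
    tendsto_integral_comp_fst_mul_comp_snd hmarg hweak' (hA1 l) (gb l)

/-- Weak convergence `λⁿ → λ` in `Λ` implies the convergence of integrals of all
"simple" test functions `Σ_{l=1}^m 1_{A_l}(t) g_l(u)`, where `{A_l}` is a finite
Borel partition of `[0,T]` and the `g_l` are bounded continuous on `U`. -/
theorem weak_convergence_implies_simple_convergence
    (T : ℝ) (hT : 0 < T) (U : Set ℝ) (hU : IsCompact U) (hUne : U.Nonempty)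
    (lam : ℕ → Measure (↥(Set.Icc (0:ℝ) T) × ↥U))
    (lamLim : Measure (↥(Set.Icc (0:ℝ) T) × ↥U))
    -- `λⁿ ∈ Λ`
    (hlam : ∀ n, ∀ t ∈ Set.Icc (0:ℝ) T,
      lam n {p : ↥(Set.Icc (0:ℝ) T) × ↥U | (p.1 : ℝ) ≤ t} = ENNReal.ofReal t)
    -- `λ ∈ Λ`
    (hlamLim : ∀ t ∈ Set.Icc (0:ℝ) T,
      lamLim {p : ↥(Set.Icc (0:ℝ) T) × ↥U | (p.1 : ℝ) ≤ t} = ENNReal.ofReal t)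
    -- weak convergence `λⁿ → λ`
    (hweak : ∀ f : ↥(Set.Icc (0:ℝ) T) × ↥U → ℝ, Continuous f →
      (∃ C, ∀ p, |f p| ≤ C) →
      Tendsto (fun n => ∫ p, f p ∂(lam n)) atTop (𝓝 (∫ p, f p ∂lamLim))) :
    -- convergence of integrals of simple test functions
    ∀ m : ℕ, 1 ≤ m → ∀ A : Fin m → Set (↥(Set.Icc (0:ℝ) T)),
      (∀ l, MeasurableSet (A l)) →
      (Pairwise fun l l' => Disjoint (A l) (A l')) →
      (⋃ l, A l) = Set.univ →
      ∀ g : Fin m → ↥U → ℝ,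
        (∀ l, Continuous (g l)) → (∀ l, ∃ C, ∀ u, |g l u| ≤ C) →
        Tendsto
          (fun n => ∫ p, ∑ l, (A l).indicator (fun _ => g l p.2) p.1 ∂(lam n))
          atTop
          (𝓝 (∫ p, ∑ l, (A l).indicator (fun _ => g l p.2) p.1 ∂lamLim)) :=
  weak_convergence_implies_simple_convergence_general T U lam lamLim hlam hlamLim hweak
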